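/- arXiv:1708.09513 — 4 statements merged into one kernel-verified Lean document; each statement's English description precedes it below -/
import Mathlib

section
/- Assume that the union of any family of strictly fewer than continuum many meager subsets of Baire space is meager (i.e., add(meager) = 𝔠). Then there exists a set S ⊆ ℕ → ℕ of cardinality 𝔠 = 2^{ℵ₀} such that no Borel-measurable function h : (ℕ → ℕ) → (ℕ → ℕ) maps S onto all of ℕ → ℕ. -/
open Cardinal Ordinal Topology Set Filter TopologicalSpace

namespace Stmt4Aux

noncomputable section

local instance nebot (x : ℕ → ℕ) : (𝓝[≠] x).NeBot := by
  rw [← mem_closure_iff_nhdsWithin_neBot]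
  rw [mem_closure_iff]
  intro o ho hxo
  rcases isOpen_pi_iff.mp ho x hxo with ⟨I, u, hu, hsub⟩
  obtain ⟨n, hn⟩ := Infinite.exists_notMem_finset I
  refine ⟨Function.update x n (x n + 1), hsub ?_, ?_⟩
  · intro i hi
    rw [Function.update_of_ne (by rintro rfl; exact hn hi)]
    exact (hu i hi).2
  · intro hmem
    have := congrFun hmem n
    simp [Function.update_self] at this

lemma isMeagre_singleton (x : ℕ → ℕ) : IsMeagre ({x} : Set (ℕ → ℕ)) :=
  residual_of_dense_open isOpen_compl_singleton (dense_compl_singleton x)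

lemma compl_nonempty_of_isMeagre {s : Set (ℕ → ℕ)} (h : IsMeagre s) : sᶜ.Nonempty :=
  (dense_of_mem_residual h).nonempty

lemma not_isMeagre_of_isOpen {u : Set (ℕ → ℕ)} (hu : IsOpen u) (hne : u.Nonempty) :
    ¬ IsMeagre u := by
  intro h
  obtain ⟨x, hx1, hx2⟩ := (dense_of_mem_residual h).inter_open_nonempty u hu hne
  exact hx2 hx1

lemma isMeagre_union {X : Type*} [TopologicalSpace X] {s t : Set X}
    (hs : IsMeagre s) (ht : IsMeagre t) : IsMeagre (s ∪ t) := by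
  rw [IsMeagre, Set.compl_union]
  exact Filter.inter_mem hs ht

lemma mk_baire : #(ℕ → ℕ) = 𝔠 := by
  rw [← Cardinal.power_def, Cardinal.mk_nat, Cardinal.aleph0_power_aleph0]

/-- Only countably many fibers of a measurable function are non-meager. -/
lemma countable_nonmeager_fibers {h : (ℕ → ℕ) → (ℕ → ℕ)} (mh : Measurable h) :
    Set.Countable {y : ℕ → ℕ | ¬ IsMeagre (h ⁻¹' {y})} := by
  classical
  set Y := {y : ℕ → ℕ | ¬ IsMeagre (h ⁻¹' {y})} with hY
  have key : ∀ y ∈ Y, ∃ u : Set (ℕ → ℕ),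
      IsOpen u ∧ u.Nonempty ∧ IsMeagre (u \ h ⁻¹' {y}) := by
    intro y hy
    have hb : BaireMeasurableSet (h ⁻¹' {y}) :=
      (mh (isClosed_singleton (x := y)).measurableSet).baireMeasurableSet
    obtain ⟨u, huo, hueq⟩ := hb.residualEq_isOpen
    have hE : ∀ᶠ x in residual (ℕ → ℕ), (x ∈ h ⁻¹' {y} ↔ x ∈ u) :=
      Filter.eventuallyEq_set.mp hueq
    have hdiff1 : IsMeagre (u \ h ⁻¹' {y}) := by
      rw [IsMeagre]
      refine Filter.mem_of_superset hE ?_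
      intro x hx hx'
      exact hx'.2 (hx.mpr hx'.1)
    have hdiff2 : IsMeagre (h ⁻¹' {y} \ u) := by
      rw [IsMeagre]
      refine Filter.mem_of_superset hE ?_
      intro x hx hx'
      exact hx'.2 (hx.mp hx'.1)
    refine ⟨u, huo, ?_, hdiff1⟩
    rcases Set.eq_empty_or_nonempty u with rfl | hne
    · exact absurd (by simpa using hdiff2) hy
    · exact hne
  choose! u huo hune humeag using key
  obtain ⟨D, hDc, hDd⟩ := TopologicalSpace.exists_countable_dense (ℕ → ℕ)
  have key2 : ∀ y ∈ Y, ∃ d ∈ D, d ∈ u y := by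
    intro y hy
    obtain ⟨d, hd1, hd2⟩ := hDd.inter_open_nonempty (u y) (huo y hy) (hune y hy)
    exact ⟨d, hd2, hd1⟩
  choose! d hdD hdu using key2
  have hinj : Set.InjOn d Y := by
    intro y hy y' hy' hdd
    by_contra hne
    have hdisj : h ⁻¹' {y} ∩ h ⁻¹' {y'} = ∅ := by
      ext x
      simp only [Set.mem_inter_iff, Set.mem_preimage, Set.mem_singleton_iff,
        Set.mem_empty_iff_false, iff_false]
      rintro ⟨rfl, h2⟩
      exact hne h2
    have hsub : u y ∩ u y' ⊆ (u y \ h ⁻¹' {y}) ∪ (u y' \ h ⁻¹' {y'}) := by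
      intro x hx
      by_cases hxy : x ∈ h ⁻¹' {y}
      · right
        refine ⟨hx.2, fun hxy' => ?_⟩
        have : x ∈ h ⁻¹' {y} ∩ h ⁻¹' {y'} := ⟨hxy, hxy'⟩
        rw [hdisj] at this
        exact this
      · exact Or.inl ⟨hx.1, hxy⟩
    have hmeag : IsMeagre (u y ∩ u y') :=
      ((isMeagre_union (humeag y hy) (humeag y' hy')).mono hsub)
    refine not_isMeagre_of_isOpen ((huo y hy).inter (huo y' hy')) ⟨d y, ?_, ?_⟩ hmeag
    · exact hdu y hy
    · rw [hdd]; exact hdu y' hy'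
  have : (d '' Y).Countable := hDc.mono (by
    rintro _ ⟨y, hy, rfl⟩; exact hdD y hy)
  exact (Set.countable_of_injective_of_countable_image hinj this)

lemma card_measurable_le :
    #{h : (ℕ → ℕ) → (ℕ → ℕ) // Measurable h} ≤ 𝔠 := by
  have h1 : #{s : Set (ℕ → ℕ) // MeasurableSet s} ≤ 𝔠 := by
    have hms : (inferInstance : MeasurableSpace (ℕ → ℕ)) =
        MeasurableSpace.generateFrom (countableBasis (ℕ → ℕ)) :=
      BorelSpace.measurable_eq.trans
        (borel_eq_generateFrom_of_subbasis (eq_generateFrom_countableBasis (ℕ → ℕ)))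
    have hb : #(countableBasis (ℕ → ℕ)) ≤ 𝔠 := by
      have := (countable_countableBasis (ℕ → ℕ)).to_subtype
      exact (Cardinal.mk_le_aleph0).trans aleph0_le_continuum
    have h2 : #{s : Set (ℕ → ℕ) |
        @MeasurableSet _ (MeasurableSpace.generateFrom (countableBasis (ℕ → ℕ))) s} ≤ 𝔠 :=
      MeasurableSpace.cardinal_measurableSet_le_continuum hb
    rw [← hms] at h2
    exact h2
  let F : {h : (ℕ → ℕ) → (ℕ → ℕ) // Measurable h} →
      (ℕ × ℕ → {s : Set (ℕ → ℕ) // MeasurableSet s}) :=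
    fun h p => ⟨(fun x => h.1 x p.1) ⁻¹' {p.2},
      ((measurable_pi_apply p.1).comp h.2) (measurableSet_singleton p.2)⟩
  have hF : Function.Injective F := by
    intro h₁ h₂ hh
    apply Subtype.ext
    funext x n
    have hs := congrArg Subtype.val (congrFun hh (n, h₁.1 x n))
    have hx1 : x ∈ (fun z : ℕ → ℕ => h₁.1 z n) ⁻¹' {h₁.1 x n} := rfl
    have hx2 := (Set.ext_iff.mp hs x).mp hx1
    have hx3 : h₂.1 x n = h₁.1 x n := hx2
    exact hx3.symm
  calc #{h : (ℕ → ℕ) → (ℕ → ℕ) // Measurable h}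
      ≤ #(ℕ × ℕ → {s : Set (ℕ → ℕ) // MeasurableSet s}) := Cardinal.mk_le_of_injective hF
    _ = #{s : Set (ℕ → ℕ) // MeasurableSet s} ^ (ℵ₀ : Cardinal) := by
        rw [← Cardinal.power_def, Cardinal.mk_denumerable (ℕ × ℕ)]
    _ ≤ 𝔠 ^ (ℵ₀ : Cardinal) := Cardinal.power_le_power_right h1
    _ = 𝔠 := Cardinal.continuum_power_aleph0

abbrev I : Type := (Cardinal.continuum.ord).ToType

instance : IsWellOrder I (· < ·) := isWellOrder_lt

lemma mk_I : #I = 𝔠 := Cardinal.mk_ord_toType 𝔠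

lemma card_Iio (i : I) : #{j : I // j < i} < 𝔠 := by
  have h1 : Ordinal.typein ((· < ·) : I → I → Prop) i
      < Ordinal.type ((· < ·) : I → I → Prop) := Ordinal.typein_lt_type _ i
  rw [Ordinal.type_toType] at h1
  have h2 := Ordinal.card_typein (r := ((· < ·) : I → I → Prop)) i
  rw [← h2]
  exact Cardinal.lt_ord.mp h1

abbrev K := {h : (ℕ → ℕ) → (ℕ → ℕ) // Measurable h}

lemma exists_step
    (hadd : ∀ 𝒮 : Set (Set (ℕ → ℕ)), Cardinal.mk 𝒮 < Cardinal.continuum →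
      (∀ s ∈ 𝒮, IsMeagre s) → IsMeagre (⋃₀ 𝒮))
    (H : I → K) (i : I) (p : ∀ j : I, j < i → (ℕ → ℕ) × (ℕ → ℕ)) :
    ∃ z : (ℕ → ℕ) × (ℕ → ℕ),
      IsMeagre ((H i).1 ⁻¹' {z.2}) ∧
      (∀ j (hj : j < i), (H i).1 (p j hj).1 ≠ z.2) ∧
      z.1 ∉ (H i).1 ⁻¹' {z.2} ∧
      (∀ j (hj : j < i), IsMeagre ((H j).1 ⁻¹' {(p j hj).2}) →
        z.1 ∉ (H j).1 ⁻¹' {(p j hj).2}) ∧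
      (∀ j (hj : j < i), z.1 ≠ (p j hj).1) := by
  classical
  set h := (H i).1 with hh
  set bad : Set (ℕ → ℕ) := {y | ¬ IsMeagre (h ⁻¹' {y})} ∪
    h '' (Set.range fun j : {j : I // j < i} => (p j.1 j.2).1) with hbaddef
  have hbad : #bad < 𝔠 := by
    refine lt_of_le_of_lt (Cardinal.mk_union_le _ _) ?_
    refine Cardinal.add_lt_of_lt aleph0_le_continuum ?_ ?_
    · have := (countable_nonmeager_fibers (H i).2).to_subtype
      exact (Cardinal.mk_le_aleph0).trans_lt aleph0_lt_continuum
    · refine lt_of_le_of_lt (Cardinal.mk_image_le) ?_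
      exact lt_of_le_of_lt (Cardinal.mk_range_le) (card_Iio i)
  have hy : ∃ y, y ∉ bad := by
    by_contra hcon
    push_neg at hcon
    have : bad = Set.univ := Set.eq_univ_iff_forall.mpr hcon
    rw [this] at hbad
    rw [Cardinal.mk_univ, mk_baire] at hbad
    exact lt_irrefl _ hbad
  obtain ⟨y, hyb⟩ := hy
  have hyfib : IsMeagre (h ⁻¹' {y}) := by
    by_contra hcon
    exact hyb (Or.inl hcon)
  set 𝒮 : Set (Set (ℕ → ℕ)) := insert (h ⁻¹' {y})
    ((Set.range fun j : {j : I // j < i} =>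
        if IsMeagre ((H j.1).1 ⁻¹' {(p j.1 j.2).2}) then (H j.1).1 ⁻¹' {(p j.1 j.2).2}
        else (∅ : Set (ℕ → ℕ))) ∪
      (Set.range fun j : {j : I // j < i} => ({(p j.1 j.2).1} : Set (ℕ → ℕ)))) with h𝒮
  have hcard : #𝒮 < 𝔠 := by
    refine lt_of_le_of_lt (Cardinal.mk_insert_le) ?_
    refine Cardinal.add_lt_of_lt aleph0_le_continuum ?_ (Cardinal.one_lt_aleph0.trans
      aleph0_lt_continuum)
    refine lt_of_le_of_lt (Cardinal.mk_union_le _ _) ?_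
    exact Cardinal.add_lt_of_lt aleph0_le_continuum
      (lt_of_le_of_lt (Cardinal.mk_range_le) (card_Iio i))
      (lt_of_le_of_lt (Cardinal.mk_range_le) (card_Iio i))
  have hmeag : ∀ s ∈ 𝒮, IsMeagre s := by
    rintro s hs
    rcases hs with rfl | hs
    · exact hyfib
    rcases hs with ⟨j, rfl⟩ | ⟨j, rfl⟩
    · show IsMeagre (if IsMeagre ((H j.1).1 ⁻¹' {(p j.1 j.2).2})
        then (H j.1).1 ⁻¹' {(p j.1 j.2).2} else (∅ : Set (ℕ → ℕ)))
      split_ifs with hm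
      · exact hm
      · exact IsMeagre.empty
    · exact isMeagre_singleton _
  have hU : IsMeagre (⋃₀ 𝒮) := hadd 𝒮 hcard hmeag
  obtain ⟨a, ha⟩ := compl_nonempty_of_isMeagre hU
  rw [Set.mem_compl_iff] at ha
  refine ⟨(a, y), hyfib, ?_, ?_, ?_, ?_⟩
  · intro j hj hcon
    exact hyb (Or.inr ⟨(p j hj).1, ⟨⟨j, hj⟩, rfl⟩, hcon⟩)
  · intro hcon
    exact ha ⟨h ⁻¹' {y}, Set.mem_insert _ _, hcon⟩
  · intro j hj hm hcon
    refine ha ⟨(H j).1 ⁻¹' {(p j hj).2}, ?_, hcon⟩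
    refine Set.mem_insert_iff.mpr (Or.inr (Or.inl ⟨⟨j, hj⟩, ?_⟩))
    show (if IsMeagre ((H j).1 ⁻¹' {(p j hj).2})
        then (H j).1 ⁻¹' {(p j hj).2} else (∅ : Set (ℕ → ℕ))) = (H j).1 ⁻¹' {(p j hj).2}
    rw [if_pos hm]
  · intro j hj hcon
    refine ha ⟨{(p j hj).1}, ?_, hcon⟩
    exact Set.mem_insert_iff.mpr (Or.inr (Or.inr ⟨⟨j, hj⟩, rfl⟩))

end

end Stmt4Aux

theorem stmt_4
    (hadd : ∀ 𝒮 : Set (Set (ℕ → ℕ)), Cardinal.mk 𝒮 < Cardinal.continuum →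
      (∀ s ∈ 𝒮, IsMeagre s) → IsMeagre (⋃₀ 𝒮)) :
    ∃ S : Set (ℕ → ℕ), Cardinal.mk S = Cardinal.continuum ∧
      ∀ h : (ℕ → ℕ) → (ℕ → ℕ), Measurable h → h '' S ≠ Set.univ := by
  classical
  -- a surjective enumeration of measurable functions
  obtain ⟨H, hHsurj⟩ : ∃ H : Stmt4Aux.I → Stmt4Aux.K, Function.Surjective H := by
    have hle : #Stmt4Aux.K ≤ #Stmt4Aux.I := by
      rw [Stmt4Aux.mk_I]; exact Stmt4Aux.card_measurable_le
    obtain ⟨g⟩ := hle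
    have : Nonempty Stmt4Aux.K := ⟨⟨id, measurable_id⟩⟩
    exact ⟨Function.invFun g, Function.invFun_surjective g.injective⟩
  -- the transfinite recursion
  let f : Stmt4Aux.I → (ℕ → ℕ) × (ℕ → ℕ) :=
    IsWellFounded.fix (α := Stmt4Aux.I) ((· < ·) : Stmt4Aux.I → Stmt4Aux.I → Prop)
      (motive := fun _ => (ℕ → ℕ) × (ℕ → ℕ))
      (fun i p => Classical.choose (Stmt4Aux.exists_step hadd H i p))
  have hfix : ∀ i, f i =
      Classical.choose (Stmt4Aux.exists_step hadd H i (fun j _ => f j)) :=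
    fun i => IsWellFounded.fix_eq _ _ i
  have hspec : ∀ i : Stmt4Aux.I,
      IsMeagre ((H i).1 ⁻¹' {(f i).2}) ∧
      (∀ j (_ : j < i), (H i).1 (f j).1 ≠ (f i).2) ∧
      (f i).1 ∉ (H i).1 ⁻¹' {(f i).2} ∧
      (∀ j (_ : j < i), IsMeagre ((H j).1 ⁻¹' {(f j).2}) →
        (f i).1 ∉ (H j).1 ⁻¹' {(f j).2}) ∧
      (∀ j (_ : j < i), (f i).1 ≠ (f j).1) := by
    intro i
    have := Classical.choose_spec (Stmt4Aux.exists_step hadd H i (fun j _ => f j))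
    rw [← hfix i] at this
    exact this
  have P1 : ∀ i, IsMeagre ((H i).1 ⁻¹' {(f i).2}) := fun i => (hspec i).1
  have P2 : ∀ i j, j < i → (H i).1 (f j).1 ≠ (f i).2 := fun i j hj => (hspec i).2.1 j hj
  have P3 : ∀ i, (f i).1 ∉ (H i).1 ⁻¹' {(f i).2} := fun i => (hspec i).2.2.1
  have P4 : ∀ i j, j < i → (f i).1 ∉ (H j).1 ⁻¹' {(f j).2} :=
    fun i j hj => (hspec i).2.2.2.1 j hj (P1 j)
  have P5 : ∀ i j, j < i → (f i).1 ≠ (f j).1 := fun i j hj => (hspec i).2.2.2.2 j hj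
  refine ⟨Set.range (fun i => (f i).1), ?_, ?_⟩
  · have hinj : Function.Injective (fun i : Stmt4Aux.I => (f i).1) := by
      intro i j hij
      rcases lt_trichotomy i j with hlt | rfl | hlt
      · exact absurd hij.symm (P5 j i hlt)
      · rfl
      · exact absurd hij (P5 i j hlt)
    rw [Cardinal.mk_range_eq _ hinj, Stmt4Aux.mk_I]
  · intro h mh hsurj
    obtain ⟨i, hi⟩ := hHsurj ⟨h, mh⟩
    have hy : (f i).2 ∈ (Set.univ : Set (ℕ → ℕ)) := Set.mem_univ _
    rw [← hsurj] at hy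
    obtain ⟨x, ⟨j, rfl⟩, hx⟩ := hy
    have hhi : (H i).1 = h := by rw [hi]
    rcases lt_trichotomy j i with hlt | rfl | hlt
    · exact P2 i j hlt (by rw [hhi]; exact hx)
    · exact P3 j (by rw [hhi]; exact hx)
    · exact P4 j i hlt (by rw [hhi]; exact hx)
end

section
/- Let f : (ℕ → ℕ) → (ℕ → ℕ) → (ℕ → ℕ) be a family of functions indexed by reals such that every function g : (ℕ → ℕ) → (ℕ → ℕ) satisfies: the set {a : ∀ x, g x ≠ f a x} is countable. Then for every uncountable set S ⊆ ℕ → ℕ there exists x ∈ ℕ → ℕ such that the map a ↦ f a x sends S onto all of ℕ → ℕ, i.e. {f a x : a ∈ S} = ℕ → ℕ. -/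
theorem stmt_6 (f : (ℕ → ℕ) → (ℕ → ℕ) → (ℕ → ℕ))
    (hΨ : ∀ g : (ℕ → ℕ) → (ℕ → ℕ), {a | ∀ x, g x ≠ f a x}.Countable)
    (S : Set (ℕ → ℕ)) (hS : ¬ S.Countable) :
    ∃ x : ℕ → ℕ, (fun a => f a x) '' S = Set.univ := by
  by_contra h
  push_neg at h
  have hex : ∀ x : ℕ → ℕ, ∃ y, y ∉ (fun a => f a x) '' S := by
    intro x
    have := h x
    rcases Set.exists_of_ssubset ⟨Set.subset_univ _, fun hsub => this (Set.eq_univ_of_univ_subset hsub)⟩ with ⟨y, _, hy⟩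
    exact ⟨y, hy⟩
  choose g hg using hex
  apply hS
  apply (hΨ g).mono
  intro a ha x hgx
  exact hg x ⟨a, ha, hgx.symm⟩
end

section
/- In ZFC there is no family f : (ℕ → ℕ) → (ℕ → ℕ) → (ℕ → ℕ) such that (1) the map (a, x) ↦ f a x is Borel measurable as a function from (ℕ → ℕ) × (ℕ → ℕ) to ℕ → ℕ, and (2) every function g : (ℕ → ℕ) → (ℕ → ℕ) is graph-disjoint from f a (i.e., ∀ x, g x ≠ f a x) for at most countably many a. -/
open Cardinal Set MeasureTheory

noncomputable section

namespace Stmt7Proof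

abbrev XX : Type := ℕ → ℕ

lemma mk_baire : #XX = 𝔠 := by
  rw [Cardinal.mk_arrow]; simp [Cardinal.aleph0_power_aleph0]

lemma not_countable_baire : ¬ Countable XX := by
  intro h
  have := Cardinal.mk_le_aleph0_iff.2 h
  rw [mk_baire] at this
  exact absurd this (not_le.2 Cardinal.aleph0_lt_continuum)

def eR : XX ≃ᵐ ℝ :=
  PolishSpace.measurableEquivOfNotCountable not_countable_baire
    (by intro h; have := Cardinal.mk_le_aleph0_iff.2 h; rw [Cardinal.mk_real] at this
        exact absurd this (not_le.2 Cardinal.aleph0_lt_continuum))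

def μ0 : Measure XX := (volume.restrict (Set.Ioo (0:ℝ) 1)).map eR.symm

lemma μ0_univ : μ0 univ = 1 := by
  rw [μ0, MeasurableEquiv.map_apply]
  simp [Real.volume_Ioo]

lemma μ0_singleton (x : XX) : μ0 {x} = 0 := by
  rw [μ0, MeasurableEquiv.map_apply]
  refine measure_mono_null ?_ (measure_singleton (eR x))
  intro y hy
  simp only [mem_preimage, mem_singleton_iff] at *
  exact (Equiv.symm_apply_eq eR.toEquiv).1 hy

instance : IsProbabilityMeasure μ0 := ⟨μ0_univ⟩

lemma countable_level (h : XX → XX) (hm : Measurable h) :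
    {y : XX | μ0 (h ⁻¹' {y}) ≠ 0}.Countable := by
  have := MeasureTheory.Measure.countable_meas_level_set_pos (μ := μ0) (g := h) hm
  refine this.mono fun y hy => ?_
  simpa [pos_iff_ne_zero, show {a | h a = y} = h ⁻¹' {y} from rfl] using hy

lemma exists_not_mem_of_countable {s : Set XX} (hs : s.Countable) : ∃ x, x ∉ s := by
  have hne : s ≠ Set.univ := by
    intro h; rw [h] at hs; exact not_countable_baire (Set.countable_univ_iff.1 hs)
  exact (Set.ne_univ_iff_exists_notMem s).1 hne

lemma exists_not_mem_of_null {A : Set XX} (hA : μ0 A = 0) : ∃ x, x ∉ A := by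
  by_contra h
  push_neg at h
  have h1 : μ0 univ ≤ μ0 A := measure_mono (fun x _ => h x)
  rw [μ0_univ, hA] at h1
  exact absurd h1 (by norm_num)

abbrev W : Type := (Cardinal.aleph 1).ord.ToType

lemma mk_W : #W = ℵ₁ := by rw [Cardinal.mk_toType, Cardinal.card_ord]

lemma countable_Iio (w : W) : (Set.Iio w).Countable := by
  rw [Cardinal.countable_iff_lt_aleph_one]
  exact Cardinal.mk_Iio_ord_toType w

section Rec

variable (F : XX → XX → XX) (e : W → XX)

lemma sect (hF : Measurable fun p : XX × XX => F p.1 p.2) (x : XX) :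
    Measurable fun a => F a x :=
  hF.comp (measurable_id.prodMk measurable_const)

def Good (w : W) (prev : ∀ u : W, u < w → XX × XX) (p : XX × XX) : Prop :=
  μ0 {a | F a (e w) = p.1} = 0 ∧
  (∀ u (h : u < w), p.1 ≠ F (prev u h).2 (e w)) ∧
  (∀ u (h : u < w), F p.2 (e u) ≠ (prev u h).1) ∧
  F p.2 (e w) ≠ p.1 ∧
  ∀ u (h : u < w), p.2 ≠ (prev u h).2

lemma exists_good (hF : Measurable fun p : XX × XX => F p.1 p.2)
    (w : W) (prev : ∀ u : W, u < w → XX × XX)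
    (hprev : ∀ u (h : u < w), μ0 {a | F a (e u) = (prev u h).1} = 0) :
    ∃ p, Good F e w prev p := by
  have hcs : Countable (Iio w) := (countable_Iio w).to_subtype
  set B : Set XX := {y | μ0 ((fun a => F a (e w)) ⁻¹' {y}) ≠ 0} ∪
    (⋃ u : Iio w, {F (prev u.1 u.2).2 (e w)}) with hBdef
  have hB : B.Countable :=
    (countable_level _ (sect F hF (e w))).union
      (countable_iUnion fun u => countable_singleton _)
  obtain ⟨v, hv⟩ := exists_not_mem_of_countable hB
  have hv1 : μ0 {a | F a (e w) = v} = 0 := by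
    by_contra h
    exact hv (Or.inl h)
  have hv2 : ∀ u (h : u < w), v ≠ F (prev u h).2 (e w) := by
    intro u h heq
    exact hv (Or.inr (mem_iUnion.2 ⟨⟨u, h⟩, by simp [heq]⟩))
  set A : Set XX := ((⋃ u : Iio w, {a | F a (e u) = (prev u.1 u.2).1}) ∪
    {a | F a (e w) = v}) ∪ (⋃ u : Iio w, {(prev u.1 u.2).2}) with hAdef
  have hA : μ0 A = 0 := by
    refine measure_union_null (measure_union_null ?_ hv1) ?_
    · exact measure_iUnion_null fun u => hprev u.1 u.2
    · exact measure_iUnion_null fun u => μ0_singleton _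
  obtain ⟨a, ha⟩ := exists_not_mem_of_null hA
  refine ⟨⟨v, a⟩, hv1, hv2, ?_, ?_, ?_⟩
  · intro u h heq
    exact ha (Or.inl (Or.inl (mem_iUnion.2 ⟨⟨u, h⟩, heq⟩)))
  · intro heq
    exact ha (Or.inl (Or.inr heq))
  · intro u h heq
    exact ha (Or.inr (mem_iUnion.2 ⟨⟨u, h⟩, heq⟩))

def step (w : W) (prev : ∀ u : W, u < w → XX × XX) : XX × XX :=
  @dite _ (∃ p, Good F e w prev p) (Classical.dec _)
    (fun h => Classical.choose h) (fun _ => default)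

def VA : W → XX × XX :=
  WellFoundedLT.fix (fun w ih => step F e w ih)

lemma VA_eq (w : W) : VA F e w = step F e w (fun u _ => VA F e u) :=
  WellFoundedLT.fix_eq (fun w ih => step F e w ih) w

lemma good_VA (hF : Measurable fun p : XX × XX => F p.1 p.2) (w : W) :
    Good F e w (fun u _ => VA F e u) (VA F e w) := by
  refine WellFoundedLT.induction (motive := fun w => Good F e w (fun u _ => VA F e u) (VA F e w)) w ?_
  intro w ih
  have hex : ∃ p, Good F e w (fun u _ => VA F e u) p :=
    exists_good F e hF w _ (fun u h => (ih u h).1)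
  rw [VA_eq]
  unfold step
  rw [dif_pos hex]
  exact Classical.choose_spec hex

end Rec

lemma uncountable_of_inj_range {T : Type} (φ : W → T) (hinj : Function.Injective φ)
    {s : Set T} (hsub : range φ ⊆ s) : ¬ s.Countable := by
  intro hs
  have h1 : (range φ).Countable := hs.mono hsub
  rw [← Cardinal.le_aleph0_iff_set_countable] at h1
  rw [Cardinal.mk_range_eq _ hinj, mk_W] at h1
  exact absurd h1 (not_le.2 Cardinal.aleph0_lt_aleph_one)

lemma case2 (F : XX → XX → XX) (hF : Measurable fun p : XX × XX => F p.1 p.2)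
    (hcard : #XX ≤ ℵ₁) :
    ∃ g : XX → XX, ¬ ({a | ∀ x, g x ≠ F a x}).Countable := by
  have hXW : #W = #XX := by
    rw [mk_W]
    refine le_antisymm ?_ hcard
    rw [mk_baire]
    exact Cardinal.aleph_one_le_continuum
  obtain ⟨E⟩ : Nonempty (W ≃ XX) := Cardinal.eq.1 hXW
  set e : W → XX := (E : W → XX) with he
  refine ⟨fun x => (VA F e (E.symm x)).1, ?_⟩
  refine uncountable_of_inj_range (fun w => (VA F e w).2) ?_ ?_
  · intro w1 w2 h12
    by_contra hne
    rcases lt_or_gt_of_ne hne with h | h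
    · exact (good_VA F e hF w2).2.2.2.2 w1 h h12.symm
    · exact (good_VA F e hF w1).2.2.2.2 w2 h h12
  · rintro _ ⟨w, rfl⟩ x
    show (VA F e (E.symm x)).1 ≠ F (VA F e w).2 x
    have hx : e (E.symm x) = x := E.apply_symm_apply x
    rcases lt_trichotomy (E.symm x) w with h | h | h
    · have h3 := (good_VA F e hF w).2.2.1 (E.symm x) h
      rw [hx] at h3
      exact fun heq => h3 heq.symm
    · have h4 := (good_VA F e hF w).2.2.2.1
      rw [h] at hx
      rw [hx] at h4
      rw [h]
      exact fun heq => h4 heq.symm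
    · have h2 := (good_VA F e hF (E.symm x)).2.1 w h
      rw [hx] at h2
      exact h2

lemma case1 (F : XX → XX → XX) (hcard : ℵ₁ < #XX) :
    ∃ g : XX → XX, ¬ ({a | ∀ x, g x ≠ F a x}).Countable := by
  obtain ⟨emb⟩ : Nonempty (W ↪ XX) :=
    (Cardinal.le_def W XX).1 (by rw [mk_W]; exact hcard.le)
  have hT : ∀ x : XX, ∃ y, ∀ w : W, F (emb w) x ≠ y := by
    intro x
    have hne : (range fun w => F (emb w) x) ≠ Set.univ := by
      intro h
      have h1 : #XX ≤ ℵ₁ := by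
        have := Cardinal.mk_range_le (f := fun w => F (emb w) x)
        rw [h, mk_W] at this
        simpa [Cardinal.mk_univ] using this
      exact absurd h1 (not_le.2 hcard)
    obtain ⟨y, hy⟩ := (Set.ne_univ_iff_exists_notMem _).1 hne
    exact ⟨y, fun w heq => hy ⟨w, heq⟩⟩
  choose g hg using hT
  refine ⟨g, uncountable_of_inj_range emb emb.injective ?_⟩
  rintro _ ⟨w, rfl⟩ x heq
  exact hg x w heq.symm

end Stmt7Proof

end

theorem stmt_7 :
    ¬ ∃ f : (ℕ → ℕ) → (ℕ → ℕ) → (ℕ → ℕ),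
      Measurable (fun p : (ℕ → ℕ) × (ℕ → ℕ) => f p.1 p.2) ∧
      ∀ g : (ℕ → ℕ) → (ℕ → ℕ), {a | ∀ x, g x ≠ f a x}.Countable := by
  rintro ⟨F, hF, h2⟩
  rcases le_or_gt (#(ℕ → ℕ)) ℵ₁ with hc | hc
  · obtain ⟨g, hg⟩ := Stmt7Proof.case2 F hF hc
    exact hg (h2 g)
  · obtain ⟨g, hg⟩ := Stmt7Proof.case1 F hc
    exact hg (h2 g)
end

section
/- Let A ⊆ ℕ and η : ℕ → ℕ, and define X and F as follows: X = {x ∈ ℕ → ℕ : {i : x i ∈ A} is infinite} and F x n = η (x i_n) where i_0 < i_1 < ⋯ enumerates {i : x i ∈ A}. Let t be a finite sequence in ℕ^{<ω} and let n = |{l < length t : t l ∈ A}|. Then: (a) any two elements x, x' ∈ X extending t satisfy F x j = F x' j for all j < n; and (b) if for every m ∈ ℕ the set η⁻¹({m}) ∩ A is infinite, then for each m ∈ ℕ there exists k ∈ A with η k = m such that every x ∈ X extending the sequence t⌢⟨k⟩ satisfies F x n = m. -/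
/-- `x` extends the finite sequence `t`. -/
def Extends (t : List ℕ) (x : ℕ → ℕ) : Prop :=
  ∀ i (h : i < t.length), x i = t.get ⟨i, h⟩

/-- The coding function: `F A η x n = η (x i_n)` where `i_0 < i_1 < ⋯`
enumerates `{i | x i ∈ A}`. -/
noncomputable def F (A : Set ℕ) (η : ℕ → ℕ) (x : ℕ → ℕ) : ℕ → ℕ :=
  fun n => η (x (Nat.nth (fun i => x i ∈ A) n))

theorem stmt_9 (A : Set ℕ) (η : ℕ → ℕ) (t : List ℕ) (n : ℕ)
    (hn : n = {l | ∃ hl : l < t.length, t.get ⟨l, hl⟩ ∈ A}.ncard) :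
    (∀ x x' : ℕ → ℕ, {i | x i ∈ A}.Infinite → {i | x' i ∈ A}.Infinite →
      Extends t x → Extends t x' → ∀ j < n, F A η x j = F A η x' j) ∧
    ((∀ m : ℕ, (η ⁻¹' {m} ∩ A).Infinite) → ∀ m : ℕ, ∃ k ∈ A, η k = m ∧
      ∀ x : ℕ → ℕ, {i | x i ∈ A}.Infinite → Extends (t ++ [k]) x →
        F A η x n = m) := by
  classical
  -- For any `x` extending `t`, the count of indices below `t.length` in `A` is `n`.
  have hcount : ∀ x : ℕ → ℕ, Extends t x →
      Nat.count (fun i => x i ∈ A) t.length = n := by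
    intro x hx
    have hset : {l | ∃ hl : l < t.length, t.get ⟨l, hl⟩ ∈ A} =
        ↑((Finset.range t.length).filter (fun l => x l ∈ A)) := by
      ext l
      simp only [Set.mem_setOf_eq, Finset.coe_filter, Finset.mem_range]
      constructor
      · rintro ⟨hl, h⟩; exact ⟨hl, by rw [hx l hl]; exact h⟩
      · rintro ⟨hl, h⟩; exact ⟨hl, by rwa [← hx l hl]⟩
    rw [hn, hset, Set.ncard_coe_finset, Nat.count_eq_card_filter_range]
  constructor
  · intro x x' hxI hx'I hxt hx't j hj
    set q : ℕ → Prop := fun i => x i ∈ A with hq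
    set q' : ℕ → Prop := fun i => x' i ∈ A with hq'
    have h1 : j < Nat.count q t.length := by rw [hcount x hxt]; exact hj
    set i := Nat.nth q j with hi
    have hiL : i < t.length := Nat.nth_lt_of_lt_count h1
    have hxx' : x i = x' i := by rw [hxt i hiL, hx't i hiL]
    have hqi : q i := Nat.nth_mem_of_infinite hxI j
    have hq'i : q' i := by show x' i ∈ A; rw [← hxx']; exact hqi
    have hcnt : Nat.count q i = j := Nat.count_nth_of_infinite hxI j
    have hcnt' : Nat.count q' i = Nat.count q i := by
      rw [Nat.count_eq_card_filter_range, Nat.count_eq_card_filter_range]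
      congr 1
      apply Finset.filter_congr
      intro l hl
      have hlL : l < t.length := lt_trans (Finset.mem_range.mp hl) hiL
      simp only [hq, hq', hxt l hlL, hx't l hlL]
    have hnth' : Nat.nth q' j = i := by
      rw [← hcnt, ← hcnt']; exact Nat.nth_count hq'i
    show η (x (Nat.nth q j)) = η (x' (Nat.nth q' j))
    rw [hnth', ← hi, hxx']
  · intro hinf m
    obtain ⟨k, hk⟩ := (hinf m).nonempty
    refine ⟨k, hk.2, hk.1, ?_⟩
    intro x hxI hxt'
    have hxt : Extends t x := by
      intro i h
      have h' : i < (t ++ [k]).length := by simp; omega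
      rw [hxt' i h']
      simp [List.getElem_append_left h]
    have hqL : x t.length ∈ A := by
      have h' : t.length < (t ++ [k]).length := by simp
      rw [hxt' t.length h']
      simpa using hk.2
    have hcL : Nat.count (fun i => x i ∈ A) t.length = n := hcount x hxt
    have hnth : Nat.nth (fun i => x i ∈ A) n = t.length := by
      rw [← hcL]; exact Nat.nth_count hqL
    show η (x (Nat.nth (fun i => x i ∈ A) n)) = m
    rw [hnth]
    have h' : t.length < (t ++ [k]).length := by simp
    rw [hxt' t.length h']
    simpa using hk.1
end
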